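/- arXiv:1503.04454 — 3 statements merged into one kernel-verified Lean document; each statement's English description precedes it below -/
import Mathlib

section
/- For rings R_1, …, R_n, the product ring R_1 × ⋯ × R_n is NIP if and only if each R_i is NIP. -/
open FirstOrder Filter

/-- A ring `M`, regarded as a structure in the first-order language of rings, is NIP if for
every formula `φ(x̄; ȳ)` (with the free variables partitioned into `x̄` and `ȳ`) there is an
`N ∈ ℕ` such that `φ` shatters no `N`-element family in `M`: there are no tuples
`a 1, …, a N` and `(b S)_{S ⊆ {1,…,N}}` from `M` with `M ⊨ φ(a i, b S)` iff `i ∈ S`. -/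
def IsNIPRing (M : Type*) [Ring M] : Prop :=
  letI := FirstOrder.Ring.compatibleRingOfRing M
  ∀ (n m : ℕ) (φ : Language.ring.Formula ((Fin n) ⊕ (Fin m))),
    ∃ N : ℕ,
      ¬∃ (a : Fin N → Fin n → M) (b : Set (Fin N) → Fin m → M),
        ∀ (i : Fin N) (S : Set (Fin N)),
          φ.Realize (Sum.elim (a i) (b S)) ↔ i ∈ S

/-!
A formula over a finite product `∏ R i` of rings is equivalent to a finite disjunction of
conjunctions `⋁ j, ⋀ i, c j i`, where `c j i` is evaluated in `R i` on the `i`-th coordinates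
(Feferman–Vaught): equations hold iff they hold coordinatewise, an existential quantifier
distributes over the coordinates, and a negated disjunction is re-expanded by choosing a failing
coordinate for each disjunct. By Sauer–Shelah each NIP relation cuts out only polynomially many
traces on an `N`-element set, so a finite Boolean combination of NIP relations cannot shatter
`N` points once `N` is large.

Conversely, `R i` is interpreted in the product with the parameter `Pi.single i 1`: multiplying
both sides of every equation by it makes a formula read only the `i`-th coordinates, so a
shattering family in `R i` gives one in the product.
-/

open Finset

section VCDimension

variable {X Y X' Y' : Type*}

def ShattersFin (P : X → Y → Prop) (N : ℕ) : Prop :=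
  ∃ (a : Fin N → X) (b : Set (Fin N) → Y), ∀ i S, P (a i) (b S) ↔ i ∈ S

def HasFiniteVCDim (P : X → Y → Prop) : Prop :=
  ∃ N, ¬ShattersFin P N

theorem HasFiniteVCDim.comap {P : X → Y → Prop} {Q : X' → Y' → Prop} (hP : HasFiniteVCDim P)
    (f : X' → X) (g : Y' → Y) (hQ : ∀ x y, Q x y ↔ P (f x) (g y)) : HasFiniteVCDim Q :=
  let ⟨N, hN⟩ := hP
  ⟨N, fun ⟨a, b, hab⟩ => hN ⟨f ∘ a, g ∘ b, fun i S => (hQ _ _).symm.trans (hab i S)⟩⟩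

theorem ShattersFin.mono {P : X → Y → Prop} {M N : ℕ} (h : ShattersFin P N) (hMN : M ≤ N) :
    ShattersFin P M := by
  obtain ⟨a, b, hab⟩ := h
  refine ⟨a ∘ Fin.castLE hMN, fun S => b (Fin.castLE hMN '' S), fun i S => ?_⟩
  rw [Function.comp_apply, hab, (Fin.castLE_injective hMN).mem_set_image]

open Classical in
noncomputable def trace (P : X → Y → Prop) {N : ℕ} (a : Fin N → X) (y : Y) : Finset (Fin N) :=
  {i | P (a i) y}

open Classical in
noncomputable def traces (P : X → Y → Prop) {N : ℕ} (a : Fin N → X) : Finset (Finset (Fin N)) :=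
  {s | ∃ y, trace P a y = s}

theorem mem_trace {P : X → Y → Prop} {N : ℕ} {a : Fin N → X} {y : Y} {i : Fin N} :
    i ∈ trace P a y ↔ P (a i) y := by
  simp [trace]

theorem shattersFin_of_shatters_traces {P : X → Y → Prop} {N : ℕ} {a : Fin N → X}
    {s : Finset (Fin N)} (hs : (traces P a).Shatters s) : ShattersFin P #s := by
  classical
  set e := s.orderEmbOfFin rfl
  have hsub (S : Set (Fin #s)) : S.toFinset.map e.toEmbedding ⊆ s := by
    intro x hx
    obtain ⟨j, -, rfl⟩ := mem_map.1 hx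
    exact s.orderEmbOfFin_mem rfl j
  choose u hu hsu using fun S => hs (hsub S)
  choose b hb using fun S => (by simpa [traces] using hu S : ∃ y, trace P a y = u S)
  refine ⟨a ∘ e, b, fun i S => ?_⟩
  have hi := congrArg (e i ∈ ·) (hsu S)
  have he : e i ∈ s := s.orderEmbOfFin_mem rfl i
  simpa [he, ← hb, mem_trace] using hi

theorem vcDim_traces_le {P : X → Y → Prop} {d N : ℕ} (hd : ¬ShattersFin P d) (a : Fin N → X) :
    (traces P a).vcDim ≤ d :=
  Finset.sup_le fun s hs => by
    by_contra! hlt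
    exact hd ((shattersFin_of_shatters_traces (mem_shatterer.1 hs)).mono hlt.le)

theorem sum_choose_le_succ_pow (N v : ℕ) : ∑ k ∈ Iic v, N.choose k ≤ (N + 1) ^ v := by
  rw [add_pow, Nat.range_succ_eq_Iic]
  refine sum_le_sum fun k hk => ?_
  rw [one_pow, mul_one]
  exact (Nat.choose_le_pow N k).trans
    (Nat.le_mul_of_pos_right _ (Nat.choose_pos (mem_Iic.1 hk)))

theorem card_traces_le {P : X → Y → Prop} {d N : ℕ} (hd : ¬ShattersFin P d) (a : Fin N → X) :
    #(traces P a) ≤ (N + 1) ^ d :=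
  calc #(traces P a) ≤ #(traces P a).shatterer := card_le_card_shatterer _
    _ ≤ ∑ k ∈ Iic (traces P a).vcDim, N.choose k := by
      simpa using card_shatterer_le_sum_vcDim (𝒜 := traces P a)
    _ ≤ (N + 1) ^ (traces P a).vcDim := sum_choose_le_succ_pow _ _
    _ ≤ (N + 1) ^ d := Nat.pow_le_pow_right N.succ_pos (vcDim_traces_le hd a)

theorem exists_succ_pow_lt_two_pow (D : ℕ) : ∃ N : ℕ, (N + 1) ^ D < 2 ^ N := by
  have h := (tendsto_pow_const_div_const_pow_of_one_lt D one_lt_two).comp (tendsto_add_atTop_nat 1)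
  obtain ⟨N, hN⟩ := (h.eventually (gt_mem_nhds (by norm_num : (0 : ℝ) < 1 / 2))).exists
  refine ⟨N, ?_⟩
  simp only [Function.comp_apply, Nat.cast_add, Nat.cast_one, pow_succ] at hN
  have h2N : (0 : ℝ) < 2 ^ N * 2 := by positivity
  rw [div_lt_iff₀ h2N] at hN
  exact_mod_cast (by linarith : ((N : ℝ) + 1) ^ D < 2 ^ N)

theorem hasFiniteVCDim_of_boolean_combination {K : Type*} [Finite K] {P : K → X → Y → Prop}
    (hP : ∀ k, HasFiniteVCDim (P k)) (B : (K → Prop) → Prop) :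
    HasFiniteVCDim fun x y => B fun k => P k x y := by
  classical
  cases nonempty_fintype K
  choose d hd using hP
  obtain ⟨N, hN⟩ := exists_succ_pow_lt_two_pow (∑ k, d k)
  refine ⟨N, fun ⟨a, b, hab⟩ => hN.not_ge ?_⟩
  set Φ : Finset (Fin N) → K → Finset (Fin N) := fun S k => trace (P k) a (b S)
  have hΦ : Function.Injective Φ := fun S S' hSS' => by
    ext i
    have hP := fun k => congrArg (i ∈ ·) (congrFun hSS' k)
    simp only [Φ, mem_trace] at hP
    rw [← Finset.mem_coe, ← Finset.mem_coe, ← hab, ← hab]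
    simp only [hP]
  calc 2 ^ N = #(univ : Finset (Finset (Fin N))) := by simp
    _ ≤ #(Fintype.piFinset fun k => traces (P k) a) :=
      card_le_card_of_injOn Φ (fun S _ => by simp [Φ, traces]) hΦ.injOn
    _ = ∏ k, #(traces (P k) a) := Fintype.card_piFinset _
    _ ≤ ∏ k, (N + 1) ^ d k := prod_le_prod' fun k _ => card_traces_le (hd k) a
    _ = (N + 1) ^ ∑ k, d k := prod_pow_eq_pow_sum _ _ _

end VCDimension

namespace FirstOrder.Ring

open FirstOrder.Language

attribute [local instance] compatibleRingOfRing

universe u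

variable {ι : Type u} {R : ι → Type*}

theorem sum_elim_pi_apply {α β : Type*} (v : α → ∀ i, R i) (w : β → ∀ i, R i) (i : ι) :
    (fun z => Sum.elim v w z i) = Sum.elim (fun a => v a i) fun b => w b i := by
  ext (z | z) <;> rfl

theorem snoc_pi_apply {k : ℕ} (xs : Fin k → ∀ i, R i) (x : ∀ i, R i) (i : ι) :
    (fun z => (Fin.snoc xs x : Fin (k + 1) → ∀ i, R i) z i) =
      Fin.snoc (fun z => xs z i) (x i) := by
  ext z
  refine Fin.lastCases ?_ (fun z => ?_) z <;> simp

variable [∀ i, Ring (R i)]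

theorem realize_term_pi_apply {α : Type*} (t : Language.ring.Term α) (v : α → ∀ i, R i)
    (i : ι) : t.realize v i = t.realize fun a => v a i := by
  induction t with
  | var => rfl
  | func f ts ih => cases f <;> simp [Term.realize, ih]

variable (R) in
def HasPiDecomposition {α : Type*} {k : ℕ} (φ : Language.ring.BoundedFormula α k) : Prop :=
  ∃ (J : Type u) (_ : Finite J) (c : J → ι → Language.ring.BoundedFormula α k),
    ∀ (v : α → ∀ i, R i) (xs : Fin k → ∀ i, R i),
      φ.Realize v xs ↔ ∃ j, ∀ i, (c j i).Realize (fun a => v a i) fun x => xs x i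

namespace HasPiDecomposition

variable {α : Type*} {k : ℕ}

theorem congr {φ ψ : Language.ring.BoundedFormula α k} (hφ : HasPiDecomposition R φ)
    (h : ∀ (v : α → ∀ i, R i) xs, ψ.Realize v xs ↔ φ.Realize v xs) :
    HasPiDecomposition R ψ :=
  let ⟨J, hJ, c, hc⟩ := hφ
  ⟨J, hJ, c, fun v xs => (h v xs).trans (hc v xs)⟩

theorem falsum : HasPiDecomposition R (⊥ : Language.ring.BoundedFormula α k) :=
  ⟨PEmpty, inferInstance, PEmpty.elim, fun _ _ => by simp [BoundedFormula.Realize]⟩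

theorem equal (t₁ t₂ : Language.ring.Term (α ⊕ Fin k)) :
    HasPiDecomposition R (t₁.bdEqual t₂) := by
  refine ⟨PUnit, inferInstance, fun _ _ => t₁.bdEqual t₂, fun v xs => ?_⟩
  simp only [BoundedFormula.realize_bdEqual, funext_iff, realize_term_pi_apply,
    sum_elim_pi_apply, exists_const]

theorem sup {φ ψ : Language.ring.BoundedFormula α k} (hφ : HasPiDecomposition R φ)
    (hψ : HasPiDecomposition R ψ) : HasPiDecomposition R (φ ⊔ ψ) := by
  obtain ⟨J₁, _, c₁, hc₁⟩ := hφ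
  obtain ⟨J₂, _, c₂, hc₂⟩ := hψ
  refine ⟨J₁ ⊕ J₂, inferInstance, Sum.elim c₁ c₂, fun v xs => ?_⟩
  simp only [BoundedFormula.realize_sup, hc₁, hc₂, Sum.exists, Sum.elim_inl, Sum.elim_inr]

theorem ex {φ : Language.ring.BoundedFormula α (k + 1)} (hφ : HasPiDecomposition R φ) :
    HasPiDecomposition R φ.ex := by
  obtain ⟨J, _, c, hc⟩ := hφ
  refine ⟨J, inferInstance, fun j i => (c j i).ex, fun v xs => ?_⟩
  simp only [BoundedFormula.realize_ex, hc, snoc_pi_apply]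
  rw [exists_comm]
  refine exists_congr fun j => ?_
  exact (Classical.skolem (p := fun i y => (c j i).Realize (fun a => v a i)
    (Fin.snoc (fun z => xs z i) y))).symm

theorem not [Finite ι] {φ : Language.ring.BoundedFormula α k} (hφ : HasPiDecomposition R φ) :
    HasPiDecomposition R φ.not := by
  obtain ⟨J, _, c, hc⟩ := hφ
  refine ⟨J → ι, inferInstance,
    fun f i => BoundedFormula.iInf fun j : {j // f j = i} => (c j i).not, fun v xs => ?_⟩
  simp only [BoundedFormula.realize_not, hc, BoundedFormula.realize_iInf, Subtype.forall,
    not_exists, not_forall, Classical.skolem (b := fun _ => ι)]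
  exact exists_congr fun f => ⟨fun h i j hj => hj ▸ h j, fun h j => h _ j rfl⟩

end HasPiDecomposition

theorem hasPiDecomposition [Finite ι] {α : Type*} {k : ℕ}
    (φ : Language.ring.BoundedFormula α k) : HasPiDecomposition R φ := by
  induction φ with
  | falsum => exact .falsum
  | equal t₁ t₂ => exact .equal t₁ t₂
  | rel r => exact isEmptyElim r
  | imp φ ψ hφ hψ =>
    refine (hφ.not.sup hψ).congr fun v xs => ?_
    simp only [BoundedFormula.realize_imp, BoundedFormula.realize_sup,
      BoundedFormula.realize_not, imp_iff_not_or]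
  | all φ hφ =>
    refine hφ.not.ex.not.congr fun v xs => ?_
    simp only [BoundedFormula.realize_all, BoundedFormula.realize_not,
      BoundedFormula.realize_ex, not_exists_not]

def mulEquations {α : Type*} (ε : α) :
    ∀ {k : ℕ}, Language.ring.BoundedFormula α k → Language.ring.BoundedFormula α k
  | _, .falsum => .falsum
  | _, .equal t₁ t₂ => .equal (.var (.inl ε) * t₁) (.var (.inl ε) * t₂)
  | _, .rel r _ => isEmptyElim r
  | _, .imp φ ψ => (mulEquations ε φ).imp (mulEquations ε ψ)
  | _, .all φ => (mulEquations ε φ).all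

theorem realize_mulEquations [DecidableEq ι] {α : Type*} {ε : α} {i : ι} {k : ℕ}
    (φ : Language.ring.BoundedFormula α k) {v : α → ∀ i, R i} (hv : v ε = Pi.single i 1)
    (xs : Fin k → ∀ i, R i) :
    (mulEquations ε φ).Realize v xs ↔ φ.Realize (fun a => v a i) fun z => xs z i := by
  induction φ with
  | falsum => rfl
  | equal t₁ t₂ =>
    simp only [mulEquations, BoundedFormula.Realize, realize_mul, Term.realize_var, Sum.elim_inl,
      hv, ← Pi.single_mul_left, one_mul, (Pi.single_injective i).eq_iff, realize_term_pi_apply,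
      sum_elim_pi_apply]
  | rel r => exact isEmptyElim r
  | imp φ ψ hφ hψ =>
    simp only [mulEquations, BoundedFormula.realize_imp, hφ, hψ]
  | all φ hφ =>
    simp only [mulEquations, BoundedFormula.realize_all, hφ, snoc_pi_apply]
    exact ⟨fun h y => by simpa using h (Pi.single i y), fun h x => h (x i)⟩

end FirstOrder.Ring

section

open FirstOrder.Language FirstOrder.Ring

attribute [local instance] compatibleRingOfRing

theorem isNIPRing_iff_hasFiniteVCDim (M : Type*) [Ring M] :
    IsNIPRing M ↔ ∀ (n m : ℕ) (φ : Language.ring.Formula (Fin n ⊕ Fin m)),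
      HasFiniteVCDim fun (a : Fin n → M) (b : Fin m → M) => φ.Realize (Sum.elim a b) :=
  Iff.rfl

variable {ι : Type*} {R : ι → Type*} [∀ i, Ring (R i)]

theorem IsNIPRing.pi [Finite ι] (h : ∀ i, IsNIPRing (R i)) : IsNIPRing (∀ i, R i) := by
  refine (isNIPRing_iff_hasFiniteVCDim _).2 fun n m φ => ?_
  obtain ⟨J, _, c, hc⟩ := hasPiDecomposition (R := R) φ
  have hcoord (p : J × ι) : HasFiniteVCDim fun (x : Fin n → ∀ i, R i) (y : Fin m → ∀ i, R i) =>
      Formula.Realize (c p.1 p.2) (Sum.elim (fun z => x z p.2) fun z => y z p.2) :=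
    ((isNIPRing_iff_hasFiniteVCDim _).1 (h p.2) n m (c p.1 p.2)).comap _ _ fun _ _ => Iff.rfl
  refine (hasFiniteVCDim_of_boolean_combination hcoord fun P => ∃ j, ∀ i, P (j, i)).comap id id
    fun x y => ?_
  have hdefault (i : ι) : (fun z => (default : Fin 0 → ∀ i, R i) z i) = default :=
    Subsingleton.elim _ _
  simp only [Formula.Realize, hc, sum_elim_pi_apply, hdefault, id]

theorem IsNIPRing.of_pi [DecidableEq ι] (h : IsNIPRing (∀ i, R i)) (i : ι) : IsNIPRing (R i) := by
  refine (isNIPRing_iff_hasFiniteVCDim _).2 fun n m φ => ?_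
  refine ((isNIPRing_iff_hasFiniteVCDim _).1 h n (m + 1)
    (mulEquations (Sum.inr (Fin.last m)) (φ.relabel (Sum.map id Fin.castSucc)))).comap
    (fun x z => Pi.single i (x z)) (fun y => Fin.snoc (fun z => Pi.single i (y z)) (Pi.single i 1))
    fun x y => ?_
  have hdefault : (fun z => (default : Fin 0 → ∀ i, R i) z i) = default :=
    Subsingleton.elim _ _
  symm
  rw [Formula.Realize, realize_mulEquations (i := i) _ (by simp), hdefault,
    ← Formula.Realize, Formula.realize_relabel]
  congr!
  ext (z | z) <;> simp

end

/-- For rings `R 1, …, R n`, the product ring `R 1 × ⋯ × R n` is NIP if and only if each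
`R i` is NIP. -/
theorem isNIPRing_pi_iff (n : ℕ) (R : Fin n → Type*) [∀ i, Ring (R i)] :
    IsNIPRing (∀ i, R i) ↔ ∀ i, IsNIPRing (R i) :=
  ⟨fun h i => h.of_pi i, IsNIPRing.pi⟩
end

section
/- Let 𝒰 be an ultrafilter on ℕ such that for every b ∈ ℕ the set {n ∈ ℕ : n has at least b distinct prime divisors} belongs to 𝒰. Then the ultraproduct ring R = ∏_{n∈ℕ} ℤ/nℤ / 𝒰 witnesses TP2: there exist a ring-language formula φ(x; ȳ) with x a single variable, tuples (b_{i,j})_{i,j<ω} from R, and l ≥ 2 such that (i) for every i, no element of R satisfies φ(x, b_{i,j}) for l distinct values of j, and (ii) for every ξ : ω → ω and every finite F ⊆ ω there is a ∈ R with R ⊨ φ(a, b_{i,ξ(i)}) for all i ∈ F. -/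
/-!
Work with the formula `m ∣ x - c`. If `𝒰`-almost all `n` are nonzero, they have more and more
prime factors, and row `i` uses as modulus the `i`-th largest prime factor `q_i(n)` of `n`,
with residues `j = 0, 1, 2, …`. Residues `j < j'` are incompatible because almost everywhere
`q_i(n) > j' - j`, and a path is consistent by the Chinese remainder theorem, the `q_i(n)` for
distinct `i` being distinct primes. Otherwise `𝒰` is principal at `0`, the ultraproduct is
`ZMod 0 = ℤ`, and row `i` asks for the exact power of the `i`-th prime `p_i` dividing `x`:
`p_i ^ (j + 1) ∣ x - p_i ^ j`.
-/

open FirstOrder Filter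

/-- The congruence on the product ring identifying two sequences when they agree
on a set in the ultrafilter `𝒰`. -/
def ultraRingCon {I : Type*} (𝒰 : Ultrafilter I) (R : I → Type*) [∀ i, CommRing (R i)] :
    RingCon (∀ i, R i) where
  r f g := ∀ᶠ i in (𝒰 : Filter I), f i = g i
  iseqv :=
    ⟨fun _ => Eventually.of_forall fun _ => rfl,
     fun h => h.mono fun _ e => e.symm,
     fun h₁ h₂ => h₂.mp (h₁.mono fun _ e₁ e₂ => e₁.trans e₂)⟩
  mul' := fun h₁ h₂ => h₂.mp (h₁.mono fun i e₁ e₂ => by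
    simp only [Pi.mul_apply, e₁, e₂])
  add' := fun h₁ h₂ => h₂.mp (h₁.mono fun i e₁ e₂ => by
    simp only [Pi.add_apply, e₁, e₂])

/-- The ultraproduct `∏_{i ∈ I} R i / 𝒰` of the family of rings `R`
with respect to the ultrafilter `𝒰`. -/
def UltraProd {I : Type*} (𝒰 : Ultrafilter I) (R : I → Type*) [∀ i, CommRing (R i)] : Type _ :=
  (ultraRingCon 𝒰 R).Quotient

instance {I : Type*} (𝒰 : Ultrafilter I) (R : I → Type*) [∀ i, CommRing (R i)] :
    CommRing (UltraProd 𝒰 R) :=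
  inferInstanceAs (CommRing (ultraRingCon 𝒰 R).Quotient)

/-- The class of a sequence in the ultraproduct. -/
def UltraProd.mk {I : Type*} (𝒰 : Ultrafilter I) (R : I → Type*) [∀ i, CommRing (R i)]
    (f : ∀ i, R i) : UltraProd 𝒰 R :=
  (ultraRingCon 𝒰 R).mk' f

/-- A ring `M`, regarded as a structure in the first-order language of rings, witnesses TP2
if there are a formula `φ(x; ȳ)` with `x` a single variable, an array of parameter tuples
`(b i j)_{i,j < ω}` from `M`, and `l ≥ 2` such that: (i) for every `i`, no element of `M`
satisfies `φ(x, b i j)` for `l` distinct values of `j`; and (ii) for every `ξ : ω → ω` and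
every finite `F ⊆ ω` there is `a ∈ M` with `M ⊨ φ(a, b i (ξ i))` for all `i ∈ F`. -/
def WitnessesTP2 (M : Type*) [Ring M] : Prop :=
  letI := FirstOrder.Ring.compatibleRingOfRing M
  ∃ (m : ℕ) (φ : Language.ring.Formula (Unit ⊕ Fin m))
    (b : ℕ → ℕ → Fin m → M) (l : ℕ),
    2 ≤ l ∧
    (∀ i : ℕ, ¬∃ (a : M) (s : Finset ℕ), s.card = l ∧
      ∀ j ∈ s, φ.Realize (Sum.elim (fun _ : Unit => a) (b i j))) ∧
    (∀ (ξ : ℕ → ℕ) (F : Finset ℕ), ∃ a : M,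
      ∀ i ∈ F, φ.Realize (Sum.elim (fun _ : Unit => a) (b i (ξ i))))

open Language

def dvdSubFormula : Language.ring.Formula (Unit ⊕ Fin 2) :=
  BoundedFormula.ex
    (Term.bdEqual (Term.var (Sum.inl (Sum.inl ())))
      (Term.var (Sum.inl (Sum.inr 1)) +
        Term.var (Sum.inl (Sum.inr 0)) * Term.var (Sum.inr 0)))

lemma realize_dvdSubFormula {M : Type*} [CommRing M] (a m c : M) :
    (letI := FirstOrder.Ring.compatibleRingOfRing M
     dvdSubFormula.Realize (Sum.elim (fun _ : Unit => a) ![m, c])) ↔ m ∣ a - c := by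
  simp [dvdSubFormula, Formula.Realize, Fin.snoc, dvd_def, sub_eq_iff_eq_add']

theorem witnessesTP2_of_dvd_sub {M : Type*} [CommRing M] (m c : ℕ → ℕ → M)
    (hrow : ∀ i j j' a, j < j' → m i j ∣ a - c i j → ¬ m i j' ∣ a - c i j')
    (hpath : ∀ (ξ : ℕ → ℕ) (F : Finset ℕ), ∃ a, ∀ i ∈ F, m i (ξ i) ∣ a - c i (ξ i)) :
    WitnessesTP2 M := by
  refine ⟨2, dvdSubFormula, fun i j => ![m i j, c i j], 2, le_rfl, ?_, ?_⟩
  · rintro i ⟨a, s, hs, hsat⟩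
    obtain ⟨j, j', hne, rfl⟩ := Finset.card_eq_two.mp hs
    simp only [Finset.mem_insert, Finset.mem_singleton, forall_eq_or_imp, forall_eq,
      realize_dvdSubFormula] at hsat
    rcases hne.lt_or_gt with hlt | hlt
    · exact hrow i j j' a hlt hsat.1 hsat.2
    · exact hrow i j' j a hlt hsat.2 hsat.1
  · intro ξ F
    obtain ⟨a, ha⟩ := hpath ξ F
    exact ⟨a, fun i hi => (realize_dvdSubFormula _ _ _).mpr (ha i hi)⟩

theorem exists_natCast_dvd_sub_of_pairwise_coprime {S ι : Type*} [CommRing S] (t : Finset ι)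
    (m c : ι → ℕ) (hm : ∀ i ∈ t, m i ≠ 0)
    (hco : (t : Set ι).Pairwise (Function.onFun Nat.Coprime m)) :
    ∃ a : S, ∀ i ∈ t, (m i : S) ∣ a - c i := by
  obtain ⟨k, hk⟩ := Nat.chineseRemainderOfFinset c m t hm hco
  refine ⟨k, fun i hi => ?_⟩
  simpa using (Int.castRingHom S).map_dvd (hk i hi).symm.dvd

namespace UltraProd

variable {I : Type*} {𝒰 : Ultrafilter I} {R : I → Type*} [∀ i, CommRing (R i)]

lemma mk_surjective : Function.Surjective (UltraProd.mk 𝒰 R) :=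
  Quot.exists_rep

lemma mk_sub (f g : ∀ i, R i) :
    UltraProd.mk 𝒰 R (f - g) = UltraProd.mk 𝒰 R f - UltraProd.mk 𝒰 R g :=
  map_sub (ultraRingCon 𝒰 R).mk' f g

lemma mk_natCast (k : ℕ) : UltraProd.mk 𝒰 R (fun i => (k : R i)) = k :=
  map_natCast (ultraRingCon 𝒰 R).mk' k

lemma mk_dvd_mk_iff {f g : ∀ i, R i} :
    UltraProd.mk 𝒰 R f ∣ UltraProd.mk 𝒰 R g ↔ ∀ᶠ i in (𝒰 : Filter I), f i ∣ g i := by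
  constructor
  · rintro ⟨w, hw⟩
    obtain ⟨w, rfl⟩ := mk_surjective w
    have hw : UltraProd.mk 𝒰 R g = UltraProd.mk 𝒰 R (f * w) :=
      hw.trans (map_mul (ultraRingCon 𝒰 R).mk' f w).symm
    exact ((RingCon.eq _).mp hw).mono fun i hi => ⟨w i, hi⟩
  · intro h
    obtain ⟨w, hw⟩ := Filter.skolem.mp h
    exact ⟨UltraProd.mk 𝒰 R w,
      ((RingCon.eq _).mpr hw).trans (map_mul (ultraRingCon 𝒰 R).mk' f w)⟩

end UltraProd

/-- `nthLargest s 0` is the largest element of `s`, `nthLargest s 1` the next one, and so on. -/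
noncomputable def nthLargest (s : Finset ℕ) (i : ℕ) : ℕ :=
  Nat.nth (· ∈ s) (s.card - 1 - i)

lemma card_toFinset_ofPred_mem (s : Finset ℕ) (hf : (Set.ofPred (· ∈ s)).Finite) :
    hf.toFinset.card = s.card := by
  simp only [SetLike.setOfPred_mem_eq, Set.toFinite_toFinset, Finset.toFinset_coe]

lemma nthLargest_mem {s : Finset ℕ} {i : ℕ} (h : i < s.card) : nthLargest s i ∈ s :=
  Nat.nth_mem_of_lt_card s.finite_toSet (by rw [card_toFinset_ofPred_mem]; omega)

lemma nthLargest_injOn (s : Finset ℕ) : (Set.Iio s.card).InjOn (nthLargest s) := by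
  intro i (hi : i < s.card) i' (hi' : i' < s.card) h
  have := Nat.nth_injOn s.finite_toSet (by rw [Set.mem_Iio, card_toFinset_ofPred_mem]; omega)
    (by rw [Set.mem_Iio, card_toFinset_ofPred_mem]; omega) h
  omega

lemma sub_le_nthLargest {s : Finset ℕ} {i : ℕ} (h : i < s.card) :
    s.card - 1 - i ≤ nthLargest s i :=
  Nat.le_nth fun hf => by rw [card_toFinset_ofPred_mem]; omega

lemma ZMod.dvd_of_natCast_dvd_natCast {n p d : ℕ} (hpn : p ∣ n)
    (h : (p : ZMod n) ∣ (d : ZMod n)) : p ∣ d := by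
  have h' := map_dvd (ZMod.castHom hpn (ZMod p)) h
  rw [map_natCast, map_natCast, ZMod.natCast_self, zero_dvd_iff] at h'
  exact (ZMod.natCast_eq_zero_iff d p).mp h'

lemma not_natCast_nthLargest_primeFactors_dvd {n i d : ℕ} (hd : 0 < d)
    (h : i + 2 + d ≤ n.primeFactors.card) :
    ¬ (nthLargest n.primeFactors i : ZMod n) ∣ (d : ZMod n) := by
  intro hdvd
  have hmem := nthLargest_mem (s := n.primeFactors) (i := i) (by omega)
  have hle := Nat.le_of_dvd hd
    (ZMod.dvd_of_natCast_dvd_natCast (Nat.dvd_of_mem_primeFactors hmem) hdvd)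
  have := sub_le_nthLargest (s := n.primeFactors) (i := i) (by omega)
  omega

lemma exists_natCast_nthLargest_primeFactors_dvd_sub {n : ℕ} (F : Finset ℕ) (ξ : ℕ → ℕ)
    (hF : ∀ i ∈ F, i < n.primeFactors.card) :
    ∃ A : ZMod n, ∀ i ∈ F, (nthLargest n.primeFactors i : ZMod n) ∣ A - ξ i := by
  have hprime : ∀ i ∈ F, (nthLargest n.primeFactors i).Prime := fun i hi =>
    Nat.prime_of_mem_primeFactors (nthLargest_mem (hF i hi))
  refine exists_natCast_dvd_sub_of_pairwise_coprime F _ ξ (fun i hi => (hprime i hi).ne_zero) ?_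
  intro i hi i' hi' hne
  exact (Nat.coprime_primes (hprime i hi) (hprime i' hi')).mpr
    fun h => hne (nthLargest_injOn _ (hF i hi) (hF i' hi') h)

open UltraProd in
theorem witnessesTP2_ultraProd_zmod_of_tendsto_card_primeFactors (𝒰 : Ultrafilter ℕ)
    (h : Tendsto (fun n => n.primeFactors.card) (𝒰 : Filter ℕ) atTop) :
    WitnessesTP2 (UltraProd 𝒰 fun n => ZMod n) := by
  refine witnessesTP2_of_dvd_sub
    (fun i _ => UltraProd.mk 𝒰 _ fun n => (nthLargest n.primeFactors i : ZMod n))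
    (fun _ j => (j : UltraProd 𝒰 fun n => ZMod n)) ?_ ?_
  · intro i j j' a hlt hj hj'
    have hdvd := dvd_sub hj hj'
    rw [sub_sub_sub_cancel_left, ← Nat.cast_sub hlt.le, ← mk_natCast, mk_dvd_mk_iff] at hdvd
    obtain ⟨n, hn, hcard⟩ := (hdvd.and (h.eventually_ge_atTop (i + 2 + (j' - j)))).exists
    exact not_natCast_nthLargest_primeFactors_dvd (by omega) hcard hn
  · intro ξ F
    have hF : ∀ᶠ n in (𝒰 : Filter ℕ), ∀ i ∈ F, i < n.primeFactors.card :=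
      (h.eventually_gt_atTop (F.sup id)).mono fun n hn i hi =>
        (Finset.le_sup (f := id) hi).trans_lt hn
    obtain ⟨A, hA⟩ := Filter.skolem.mp
      (hF.mono fun n hn => exists_natCast_nthLargest_primeFactors_dvd_sub F ξ hn)
    refine ⟨UltraProd.mk 𝒰 _ A, fun i hi => ?_⟩
    rw [← mk_natCast, ← mk_sub, mk_dvd_mk_iff]
    exact hA.mono fun n hn => hn i hi

theorem witnessesTP2_of_not_pow_succ_dvd_pow {M : Type*} [CommRing M]
    (h : ∀ p j : ℕ, p.Prime → ¬ (p : M) ^ (j + 1) ∣ (p : M) ^ j) : WitnessesTP2 M := by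
  have hprime (i : ℕ) : (Nat.nth Nat.Prime i).Prime := Nat.prime_nth_prime i
  refine witnessesTP2_of_dvd_sub (fun i j => (Nat.nth Nat.Prime i : M) ^ (j + 1))
    (fun i j => (Nat.nth Nat.Prime i : M) ^ j) ?_ ?_
  · intro i j j' a hlt hj hj'
    set p : M := ((Nat.nth Nat.Prime i : ℕ) : M)
    have hj'' : p ^ (j + 1) ∣ a - p ^ j' := (pow_dvd_pow p (by omega)).trans hj'
    have hdiff := dvd_sub hj hj''
    rw [sub_sub_sub_cancel_left, dvd_sub_right (pow_dvd_pow p hlt)] at hdiff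
    exact h _ j (hprime i) hdiff
  · intro ξ F
    obtain ⟨a, ha⟩ := exists_natCast_dvd_sub_of_pairwise_coprime (S := M) F
      (fun i => Nat.nth Nat.Prime i ^ (ξ i + 1)) (fun i => Nat.nth Nat.Prime i ^ ξ i)
      (fun i _ => pow_ne_zero _ (hprime i).ne_zero) fun i _ i' _ hne =>
        Nat.Coprime.pow _ _ <| (Nat.coprime_primes (hprime i) (hprime i')).mpr
          fun h => hne (Nat.nth_injective Nat.infinite_setOfPred_prime h)
    exact ⟨a, fun i hi => by simpa using ha i hi⟩

open UltraProd in
lemma ultraProd_zmod_not_pow_succ_dvd_pow (𝒰 : Ultrafilter ℕ)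
    (h : ∀ᶠ n in (𝒰 : Filter ℕ), n = 0) (p j : ℕ) (hp : p.Prime) :
    ¬ (p : UltraProd 𝒰 fun n => ZMod n) ^ (j + 1) ∣ (p : UltraProd 𝒰 fun n => ZMod n) ^ j := by
  rw [← Nat.cast_pow, ← Nat.cast_pow, ← mk_natCast, ← mk_natCast, mk_dvd_mk_iff]
  intro hdvd
  obtain ⟨n, hn, rfl⟩ := (hdvd.and h).exists
  have := (Nat.pow_dvd_pow_iff_le_right hp.one_lt).mp (Int.natCast_dvd_natCast.mp hn)
  omega

/-- Let `𝒰` be an ultrafilter on `ℕ` such that for every `b ∈ ℕ` the set of `n` having at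
least `b` distinct prime divisors belongs to `𝒰`.  Then the ultraproduct ring
`∏_{n ∈ ℕ} ℤ/nℤ / 𝒰` witnesses TP2. -/
theorem tp2_ultraproduct_of_unboundedly_many_primes (𝒰 : Ultrafilter ℕ)
    (hU : ∀ b : ℕ,
      {n : ℕ | ∃ s : Finset ℕ, b ≤ s.card ∧ ∀ p ∈ s, Nat.Prime p ∧ p ∣ n} ∈ 𝒰) :
    WitnessesTP2 (UltraProd 𝒰 fun n => ZMod n) := by
  by_cases h0 : ∀ᶠ n in (𝒰 : Filter ℕ), n = 0
  · exact witnessesTP2_of_not_pow_succ_dvd_pow (ultraProd_zmod_not_pow_succ_dvd_pow 𝒰 h0)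
  refine witnessesTP2_ultraProd_zmod_of_tendsto_card_primeFactors 𝒰
    (tendsto_atTop.mpr fun b => ?_)
  filter_upwards [hU b, Ultrafilter.eventually_not.mpr h0] with n ⟨s, hs, hsp⟩ hn
  exact hs.trans <| Finset.card_le_card fun p hp =>
    Nat.mem_primeFactors.mpr ⟨(hsp p hp).1, (hsp p hp).2, hn⟩
end

section
/- Let p be a prime, e ≥ 1, and let a, b ∈ ℤ/p^eℤ satisfy a·b = 1 and a ≠ b. Let A be the diagonal matrix diag(a, b) ∈ SL₂(ℤ/p^eℤ), and let N = {X ∈ SL₂(ℤ/p^eℤ) : X (g A g⁻¹) X⁻¹ = g A g⁻¹ for all g ∈ SL₂(ℤ/p^eℤ)} be the centralizer of the conjugacy class of A. Then N is a normal subgroup of SL₂(ℤ/p^eℤ) and the index [SL₂(ℤ/p^eℤ) : N] is at least p. -/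
/-- Let `p` be a prime, `e ≥ 1`, and let `a b : ℤ/p^eℤ` satisfy `a * b = 1` and `a ≠ b`.
Let `A` be the diagonal matrix `diag(a, b)` in `SL₂(ℤ/p^eℤ)`.  Then the centralizer
`N = {X : X (g A g⁻¹) X⁻¹ = g A g⁻¹ for all g}` of the conjugacy class of `A` is a normal
subgroup of `SL₂(ℤ/p^eℤ)` whose index is at least `p`. -/
theorem centralizer_conjClass_normal_and_index_ge (p e : ℕ) (hp : p.Prime) (he : 1 ≤ e)
    (a b : ZMod (p ^ e)) (hab : a * b = 1) (hne : a ≠ b)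
    (A : Matrix.SpecialLinearGroup (Fin 2) (ZMod (p ^ e)))
    (hA : (A : Matrix (Fin 2) (Fin 2) (ZMod (p ^ e))) = Matrix.diagonal ![a, b]) :
    ∃ N : Subgroup (Matrix.SpecialLinearGroup (Fin 2) (ZMod (p ^ e))),
      (∀ X, X ∈ N ↔ ∀ g, X * (g * A * g⁻¹) * X⁻¹ = g * A * g⁻¹) ∧
      N.Normal ∧ p ≤ N.index := by
  haveI : NeZero (p ^ e) := ⟨pow_ne_zero e hp.ne_zero⟩
  let S : Set (Matrix.SpecialLinearGroup (Fin 2) (ZMod (p ^ e))) :=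
    {X | ∀ g, X * (g * A * g⁻¹) * X⁻¹ = g * A * g⁻¹}
  have one_mem : (1 : Matrix.SpecialLinearGroup (Fin 2) (ZMod (p ^ e))) ∈ S := by
    intro g; group
  have mul_mem : ∀ {x y : Matrix.SpecialLinearGroup (Fin 2) (ZMod (p ^ e))},
      x ∈ S → y ∈ S → x * y ∈ S := by
    intro x y hx hy g
    calc x * y * (g * A * g⁻¹) * (x * y)⁻¹
        = x * (y * (g * A * g⁻¹) * y⁻¹) * x⁻¹ := by group
      _ = g * A * g⁻¹ := by rw [hy g, hx g]
  have inv_mem : ∀ {x : Matrix.SpecialLinearGroup (Fin 2) (ZMod (p ^ e))},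
      x ∈ S → x⁻¹ ∈ S := by
    intro x hx g
    have h := hx g
    conv_lhs => rw [← h]
    group
  let N : Subgroup (Matrix.SpecialLinearGroup (Fin 2) (ZMod (p ^ e))) :=
    { carrier := S, one_mem' := one_mem, mul_mem' := mul_mem, inv_mem' := inv_mem }
  have hmem : ∀ X, X ∈ N ↔ ∀ g, X * (g * A * g⁻¹) * X⁻¹ = g * A * g⁻¹ := fun X => Iff.rfl
  refine ⟨N, hmem, ⟨?_⟩, ?_⟩
  · intro n hn y g
    have h := (hmem n).mp hn (y⁻¹ * g)
    show y * n * y⁻¹ * (g * A * g⁻¹) * (y * n * y⁻¹)⁻¹ = g * A * g⁻¹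
    calc y * n * y⁻¹ * (g * A * g⁻¹) * (y * n * y⁻¹)⁻¹
        = y * (n * (y⁻¹ * g * A * (y⁻¹ * g)⁻¹) * n⁻¹) * y⁻¹ := by group
      _ = y * (y⁻¹ * g * A * (y⁻¹ * g)⁻¹) * y⁻¹ := by rw [h]
      _ = g * A * g⁻¹ := by group
  · -- index ≥ p
    let u : ZMod (p ^ e) → Matrix.SpecialLinearGroup (Fin 2) (ZMod (p ^ e)) :=
      fun t => ⟨!![1, t; 0, 1], by simp [Matrix.det_fin_two_of]⟩
    have humul : ∀ t s, u t * u s = u (t + s) := by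
      intro t s
      apply Subtype.ext
      show (!![1, t; 0, 1] : Matrix (Fin 2) (Fin 2) (ZMod (p ^ e))) * !![1, s; 0, 1]
          = !![1, t + s; 0, 1]
      rw [Matrix.mul_fin_two]
      apply Matrix.ext; intro i j; fin_cases i <;> fin_cases j <;> simp <;> ring
    have huinv : ∀ t, (u t)⁻¹ = u (-t) := by
      intro t
      symm
      apply eq_inv_of_mul_eq_one_left
      rw [humul]
      apply Subtype.ext
      show (!![1, -t + t; 0, 1] : Matrix (Fin 2) (Fin 2) (ZMod (p ^ e))) = 1
      apply Matrix.ext; intro i j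
      fin_cases i <;> fin_cases j <;> simp [Matrix.one_apply]
    -- key: if u r ∈ N then r * (b - a) = 0
    have hkey : ∀ r : ZMod (p ^ e), u r ∈ N → r * (b - a) = 0 := by
      intro r hr
      have h := (hmem _).mp hr 1
      simp only [one_mul, inv_one, mul_one] at h
      rw [mul_inv_eq_iff_eq_mul] at h
      have h2 : ((u r * A : Matrix.SpecialLinearGroup (Fin 2) (ZMod (p ^ e)))
            : Matrix (Fin 2) (Fin 2) (ZMod (p ^ e)))
          = ((A * u r : Matrix.SpecialLinearGroup (Fin 2) (ZMod (p ^ e)))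
            : Matrix (Fin 2) (Fin 2) (ZMod (p ^ e))) := congrArg _ h
      rw [Matrix.SpecialLinearGroup.coe_mul, Matrix.SpecialLinearGroup.coe_mul] at h2
      have h3 := congrFun (congrFun h2 0) 1
      show r * (b - a) = 0
      simp [u, hA, Matrix.mul_apply, Fin.sum_univ_two] at h3
      have : r * (b - a) = r * b - a * r := by ring
      rw [this, h3, sub_self]
    -- injection Fin p → quotient
    have hinj : Function.Injective
        (fun i : Fin p => (QuotientGroup.mk (u i) : _ ⧸ N)) := by
      intro i j hij
      by_contra hij'
      -- wlog i.val < j.val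
      have key : ∀ i j : Fin p, i.val < j.val →
          (QuotientGroup.mk (u i) : _ ⧸ N) = QuotientGroup.mk (u j) → False := by
        intro i j hlt hq
        rw [QuotientGroup.eq] at hq
        rw [huinv, humul] at hq
        have hz := hkey _ hq
        set d : ℕ := j.val - i.val with hd
        have hdpos : 0 < d := Nat.sub_pos_of_lt hlt
        have hdlt : d < p := lt_of_le_of_lt (Nat.sub_le _ _) j.isLt
        have hcast : (-(i : ZMod (p ^ e)) + (j : ZMod (p ^ e))) = (d : ZMod (p ^ e)) := by
          have : ((j.val : ℕ) : ZMod (p ^ e)) - ((i.val : ℕ) : ZMod (p ^ e))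
              = ((d : ℕ) : ZMod (p ^ e)) := by
            rw [hd, Nat.cast_sub hlt.le]
          rw [neg_add_eq_sub]
          exact_mod_cast this
        rw [hcast] at hz
        have hu : IsUnit ((d : ℕ) : ZMod (p ^ e)) := by
          rw [ZMod.isUnit_iff_coprime]
          apply Nat.Coprime.pow_right
          exact Nat.coprime_comm.mp (hp.coprime_iff_not_dvd.mpr
            (Nat.not_dvd_of_pos_of_lt hdpos hdlt))
        have hba : (b - a) = 0 := by
          obtain ⟨v, hv⟩ := hu
          rw [← hv] at hz
          exact (Units.mul_right_eq_zero v).mp hz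
        exact hne (sub_eq_zero.mp hba).symm
      rcases lt_trichotomy i.val j.val with h | h | h
      · exact key i j h hij
      · exact hij' (Fin.ext h)
      · exact key j i h hij.symm
    calc p = Nat.card (Fin p) := by simp
      _ ≤ Nat.card (_ ⧸ N) := Nat.card_le_card_of_injective _ hinj
      _ = N.index := rfl
end
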